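/- For all real x with 0 < x < π/2, 2 + (2/45 − (2/315)x^2 − α·x^4)·x^3·tan x < (x/sin x)^2 + x/tan x < 2 + (2/45 − (2/315)x^2 − β·x^4)·x^3·tan x, where α = (224 − 8π^2)/(315π^4) and β = 4/1575. -/

import Mathlib

/-!
Multiplying by `sin x ^ 2 * cos x`, both inequalities compare `cos x * N x` with
`p x * x ^ 3 * sin x ^ 3`, where `N x = x ^ 2 + x sin x cos x - 2 sin x ^ 2` and `p` is the
quartic weight. Since `N x = x ^ 2 + (x / 2) sin 2x + cos 2x - 1`, the alternating Taylor bounds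
of `sin` and `cos` at `2x` pin `N x` between `x ^ 6` times two explicit polynomials; with Taylor
bounds for `sin x` and `cos x` as well, each inequality becomes the positivity of an explicit
polynomial on an interval, certified by interval evaluation of its Horner scheme.

The lower bound is sharp at `π / 2`, where both sides vanish, so for `x ≥ 13 / 10` it is instead
divided by `π / 2 - x`: the choice of `α` makes the weight a multiple of `π / 2 - x`, and
`cos x = sin (π / 2 - x) ≥ (π / 2 - x) (1 - (π / 2 - x) ^ 2 / 6)`.
-/

open Real Finset
open scoped Nat

noncomputable def sinTaylor (n : ℕ) (x : ℝ) : ℝ :=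
  ∑ k ∈ range n, (-1) ^ k * x ^ (2 * k + 1) / (2 * k + 1)!

noncomputable def cosTaylor (n : ℕ) (x : ℝ) : ℝ :=
  ∑ k ∈ range n, (-1) ^ k * x ^ (2 * k) / (2 * k)!

theorem hasDerivAt_pow_div_factorial (m : ℕ) (x : ℝ) :
    HasDerivAt (fun y : ℝ => y ^ (m + 1) / (m + 1)!) (x ^ m / m !) x := by
  refine ((hasDerivAt_pow (m + 1) x).div_const ((m + 1)! : ℝ)).congr_deriv ?_
  rw [Nat.factorial_succ, Nat.add_sub_cancel]
  push_cast
  field_simp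

theorem hasDerivAt_sinTaylor (n : ℕ) (x : ℝ) :
    HasDerivAt (sinTaylor n) (cosTaylor n x) x := by
  unfold sinTaylor cosTaylor
  refine HasDerivAt.fun_sum fun k _ => ?_
  simpa only [mul_div_assoc] using
    (hasDerivAt_pow_div_factorial (2 * k) x).const_mul ((-1 : ℝ) ^ k)

theorem hasDerivAt_cosTaylor (n : ℕ) (x : ℝ) :
    HasDerivAt (cosTaylor (n + 1)) (-sinTaylor n x) x := by
  have h : cosTaylor (n + 1) = fun y =>
      ∑ k ∈ range n, -((-1 : ℝ) ^ k * (y ^ (2 * k + 1 + 1) / (2 * k + 1 + 1)!)) + 1 := by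
    ext y
    simp only [cosTaylor, sum_range_succ',
      show ∀ k, 2 * (k + 1) = 2 * k + 1 + 1 from fun _ => rfl]
    simp only [pow_succ, mul_zero, pow_zero, Nat.factorial_zero, Nat.cast_one, div_one, mul_one]
    congr 1
    exact sum_congr rfl fun k _ => by ring
  rw [h, sinTaylor, ← sum_neg_distrib]
  refine (HasDerivAt.fun_sum fun k _ => ?_).add_const 1
  simpa only [mul_div_assoc] using
    ((hasDerivAt_pow_div_factorial (2 * k + 1) x).const_mul ((-1 : ℝ) ^ k)).fun_neg

theorem nonneg_of_hasDerivAt_nonneg {f f' : ℝ → ℝ} (hf : ∀ t, HasDerivAt f (f' t) t)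
    (h₀ : f 0 = 0) (hf' : ∀ t, 0 ≤ t → 0 ≤ f' t) {x : ℝ} (hx : 0 ≤ x) :
    0 ≤ f x := by
  have hmono : MonotoneOn f (Set.Ici 0) :=
    monotoneOn_of_hasDerivWithinAt_nonneg (convex_Ici 0)
      (fun t _ => (hf t).continuousAt.continuousWithinAt)
      (fun t _ => (hf t).hasDerivWithinAt)
      (fun t ht => hf' t (interior_subset ht))
  simpa [h₀] using hmono Set.self_mem_Ici hx hx

theorem sinTaylor_zero_right (n : ℕ) : sinTaylor n 0 = 0 := by
  simp [sinTaylor]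

theorem cosTaylor_succ_zero_right (n : ℕ) : cosTaylor (n + 1) 0 = 1 := by
  simp [cosTaylor, sum_range_succ']

theorem sin_cos_taylor_alternating (n : ℕ) {x : ℝ} (hx : 0 ≤ x) :
    0 ≤ (-1) ^ n * (cosTaylor (n + 1) x - cos x) ∧
      0 ≤ (-1) ^ n * (sinTaylor (n + 1) x - sin x) := by
  have sin_of_cos : ∀ m, (∀ t, 0 ≤ t → 0 ≤ (-1) ^ m * (cosTaylor (m + 1) t - cos t)) →
      ∀ t, 0 ≤ t → 0 ≤ (-1) ^ m * (sinTaylor (m + 1) t - sin t) := fun m hcos t ht =>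
    nonneg_of_hasDerivAt_nonneg
      (fun s => ((hasDerivAt_sinTaylor (m + 1) s).sub (hasDerivAt_sin s)).const_mul _)
      (by simp [sinTaylor_zero_right]) hcos ht
  have cos_of_sin : ∀ m, (∀ t, 0 ≤ t → 0 ≤ (-1) ^ m * (sinTaylor (m + 1) t - sin t)) →
      ∀ t, 0 ≤ t → 0 ≤ (-1) ^ (m + 1) * (cosTaylor (m + 1 + 1) t - cos t) :=
    fun m hsin t ht =>
    nonneg_of_hasDerivAt_nonneg
      (fun s => (((hasDerivAt_cosTaylor (m + 1) s).sub (hasDerivAt_cos s)).const_mul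
        ((-1) ^ (m + 1))).congr_deriv (by ring))
      (by simp [cosTaylor_succ_zero_right]) hsin ht
  have hcos : ∀ t, 0 ≤ t → 0 ≤ (-1) ^ n * (cosTaylor (n + 1) t - cos t) := by
    induction n with
    | zero => intro t _; simpa [cosTaylor] using cos_le_one t
    | succ n ih => exact cos_of_sin n (sin_of_cos n ih)
  exact ⟨hcos x hx, sin_of_cos n hcos x hx⟩

theorem sin_le_sinTaylor (k : ℕ) {x : ℝ} (hx : 0 ≤ x) :
    sin x ≤ sinTaylor (2 * k + 1) x := by
  have h := (sin_cos_taylor_alternating (2 * k) hx).2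
  rw [pow_mul, neg_one_sq, one_pow, one_mul] at h
  linarith

theorem sinTaylor_le_sin (k : ℕ) {x : ℝ} (hx : 0 ≤ x) :
    sinTaylor (2 * k + 2) x ≤ sin x := by
  have h := (sin_cos_taylor_alternating (2 * k + 1) hx).2
  rw [pow_succ, pow_mul, neg_one_sq, one_pow, one_mul] at h
  linarith

theorem cos_le_cosTaylor (k : ℕ) {x : ℝ} (hx : 0 ≤ x) :
    cos x ≤ cosTaylor (2 * k + 1) x := by
  have h := (sin_cos_taylor_alternating (2 * k) hx).1
  rw [pow_mul, neg_one_sq, one_pow, one_mul] at h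
  linarith

theorem cosTaylor_le_cos (k : ℕ) {x : ℝ} (hx : 0 ≤ x) :
    cosTaylor (2 * k + 2) x ≤ cos x := by
  have h := (sin_cos_taylor_alternating (2 * k + 1) hx).1
  rw [pow_succ, pow_mul, neg_one_sq, one_pow, one_mul] at h
  linarith

def hornerEval : List ℝ → ℝ → ℝ
  | [], _ => 0
  | c :: cs, t => c + t * hornerEval cs t

def hornerLowerBound (a b : ℝ) : List ℝ → ℝ
  | [] => 0
  | c :: cs => c + min (a * hornerLowerBound a b cs) (b * hornerLowerBound a b cs)

theorem hornerLowerBound_le_hornerEval {a b t : ℝ} (ha : 0 ≤ a) (hat : a ≤ t)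
    (htb : t ≤ b) :
    ∀ cs : List ℝ, hornerLowerBound a b cs ≤ hornerEval cs t
  | [] => le_rfl
  | c :: cs => by
    have ih := hornerLowerBound_le_hornerEval ha hat htb cs
    set L := hornerLowerBound a b cs
    have hmin : min (a * L) (b * L) ≤ t * L := by
      rcases le_total 0 L with hL | hL
      · exact min_le_of_left_le (mul_le_mul_of_nonneg_right hat hL)
      · exact min_le_of_right_le (mul_le_mul_of_nonpos_right htb hL)
    have := mul_le_mul_of_nonneg_left ih (ha.trans hat)
    simp only [hornerLowerBound, hornerEval]
    linarith

theorem hornerEval_pos {a b t : ℝ} {cs : List ℝ} (ha : 0 ≤ a) (hat : a ≤ t) (htb : t ≤ b)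
    (h : 0 < hornerLowerBound a b cs) : 0 < hornerEval cs t :=
  h.trans_le (hornerLowerBound_le_hornerEval ha hat htb cs)

noncomputable def dualWilkerNumerator (x : ℝ) : ℝ := x ^ 2 + x * sin x * cos x - 2 * sin x ^ 2

theorem dualWilkerNumerator_eq (x : ℝ) :
    dualWilkerNumerator x = x ^ 2 + x / 2 * sin (2 * x) + cos (2 * x) - 1 := by
  rw [dualWilkerNumerator, sin_two_mul, cos_two_mul, cos_sq']
  ring

noncomputable def dualWilkerNumeratorLower (x : ℝ) : ℝ :=
  x ^ 6 * (2 / 45 - 2 / 315 * x ^ 2 + 2 / 4725 * x ^ 4 - 4 / 155925 * x ^ 6)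

noncomputable def dualWilkerNumeratorUpper (x : ℝ) : ℝ :=
  x ^ 6 * (2 / 45 - 2 / 315 * x ^ 2 + 2 / 4725 * x ^ 4 + 4 / 467775 * x ^ 6)

theorem dualWilkerNumerator_bounds {x : ℝ} (hx : 0 ≤ x) :
    dualWilkerNumeratorLower x ≤ dualWilkerNumerator x ∧
      dualWilkerNumerator x ≤ dualWilkerNumeratorUpper x := by
  have hu : 0 ≤ 2 * x := by positivity
  have hx2 : 0 ≤ x / 2 := by positivity
  have hs₁ := mul_le_mul_of_nonneg_left (sinTaylor_le_sin 2 hu) hx2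
  have hs₂ := mul_le_mul_of_nonneg_left (sin_le_sinTaylor 2 hu) hx2
  have hc₁ := cosTaylor_le_cos 2 hu
  have hc₂ := cos_le_cosTaylor 3 hu
  simp only [sinTaylor, cosTaylor, sum_range_succ, sum_range_zero] at hs₁ hs₂ hc₁ hc₂
  norm_num [Nat.factorial] at hs₁ hs₂ hc₁ hc₂
  rw [dualWilkerNumerator_eq, dualWilkerNumeratorLower, dualWilkerNumeratorUpper]
  constructor <;> linarith

theorem dualWilker_sub_eq (p : ℝ) {x : ℝ} (hs : sin x ≠ 0) (hc : cos x ≠ 0) :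
    (x / sin x) ^ 2 + x / tan x - (2 + p * x ^ 3 * tan x) =
      (cos x * dualWilkerNumerator x - p * x ^ 3 * sin x ^ 3) / (sin x ^ 2 * cos x) := by
  rw [tan_eq_sin_div_cos, dualWilkerNumerator]
  field_simp
  ring

theorem lt_dualWilker_iff (p : ℝ) {x : ℝ} (hs : 0 < sin x) (hc : 0 < cos x) :
    2 + p * x ^ 3 * tan x < (x / sin x) ^ 2 + x / tan x ↔
      p * x ^ 3 * sin x ^ 3 < cos x * dualWilkerNumerator x := by
  rw [← sub_pos, dualWilker_sub_eq p hs.ne' hc.ne', div_pos_iff_of_pos_right (by positivity),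
    sub_pos]

theorem dualWilker_lt_iff (p : ℝ) {x : ℝ} (hs : 0 < sin x) (hc : 0 < cos x) :
    (x / sin x) ^ 2 + x / tan x < 2 + p * x ^ 3 * tan x ↔
      cos x * dualWilkerNumerator x < p * x ^ 3 * sin x ^ 3 := by
  rw [← sub_neg, dualWilker_sub_eq p hs.ne' hc.ne', div_lt_iff₀ (by positivity), zero_mul,
    sub_neg]

theorem alpha_bounds :
    47 / 10000 ≤ (224 - 8 * π ^ 2) / (315 * π ^ 4) ∧
      (224 - 8 * π ^ 2) / (315 * π ^ 4) ≤ 1 / 210 := by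
  have h₁ : 3.14 ^ 2 < π ^ 2 := by gcongr; exact pi_gt_d2
  have h₂ : π ^ 2 < 3.1416 ^ 2 := by gcongr; exact pi_lt_d4
  have h₄ : π ^ 4 = (π ^ 2) ^ 2 := by ring
  rw [le_div_iff₀ (by positivity), div_le_iff₀ (by positivity), h₄]
  constructor <;> nlinarith

theorem dualWilkerNumeratorLower_nonneg {x : ℝ} (hx : x ^ 2 ≤ 5 / 2) :
    0 ≤ dualWilkerNumeratorLower x := by
  have : 0 ≤ 2 / 45 - 2 / 315 * x ^ 2 + 2 / 4725 * x ^ 4 - 4 / 155925 * x ^ 6 := by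
    nlinarith [sq_nonneg x, pow_le_pow_left₀ (sq_nonneg x) hx 2,
      pow_le_pow_left₀ (sq_nonneg x) hx 3]
  rw [dualWilkerNumeratorLower]
  positivity

theorem cos_mul_dualWilkerNumerator_lt {x : ℝ} (hx0 : 0 < x) (hx : x < π / 2) :
    cos x * dualWilkerNumerator x <
      (2 / 45 - 2 / 315 * x ^ 2 - 4 / 1575 * x ^ 4) * x ^ 3 * sin x ^ 3 := by
  have hx2 : x ^ 2 ≤ 5 / 2 := by nlinarith [pi_lt_d2]
  obtain ⟨hNl, hNh⟩ := dualWilkerNumerator_bounds hx0.le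
  have hN : 0 ≤ dualWilkerNumerator x := (dualWilkerNumeratorLower_nonneg hx2).trans hNl
  have hc : 0 ≤ cos x := cos_nonneg_of_mem_Icc ⟨by linarith, hx.le⟩
  have hS : sinTaylor 4 x ≤ sin x := sinTaylor_le_sin 1 hx0.le
  have hC : cos x ≤ cosTaylor 3 x := cos_le_cosTaylor 1 hx0.le
  have hS0 : 0 ≤ sinTaylor 4 x := by
    simp only [sinTaylor, sum_range_succ, sum_range_zero]
    norm_num [Nat.factorial]
    nlinarith [pow_le_pow_left₀ (sq_nonneg x) hx2 2, pow_le_pow_left₀ (sq_nonneg x) hx2 3]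
  have hP : 0 ≤ 2 / 45 - 2 / 315 * x ^ 2 - 4 / 1575 * x ^ 4 := by nlinarith
  have hpoly : cosTaylor 3 x * dualWilkerNumeratorUpper x <
      (2 / 45 - 2 / 315 * x ^ 2 - 4 / 1575 * x ^ 4) * x ^ 3 * sinTaylor 4 x ^ 3 := by
    -- The coefficients are the exact expansion of the difference, divided by `x ^ 12`, in powers
    -- of `x ^ 2`; `ring` checks this below.
    have hq := hornerEval_pos le_rfl (sq_nonneg x) hx2 (cs := [239 / 534600, -26801 / 174636000,
      15319 / 628689600, -209 / 90720000, 11021 / 80015040000, -211 / 38102400000,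
      2137 / 14402707200000, -247 / 100818950400000, 1 / 50409475200000])
      (by norm_num [hornerLowerBound])
    refine sub_pos.1 (((mul_pos (pow_pos hx0 12) hq).trans_eq ?_))
    simp only [sinTaylor, cosTaylor, sum_range_succ, sum_range_zero, hornerEval,
      dualWilkerNumeratorUpper]
    norm_num [Nat.factorial]
    ring
  calc cos x * dualWilkerNumerator x ≤ cosTaylor 3 x * dualWilkerNumeratorUpper x := by
        gcongr
        exact hc.trans hC
    _ < _ := hpoly
    _ ≤ _ := by gcongr

theorem lt_cos_mul_dualWilkerNumerator_of_le {x : ℝ} (hx0 : 0 < x) (hx : x ≤ 13 / 10) :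
    (2 / 45 - 2 / 315 * x ^ 2 - 47 / 10000 * x ^ 4) * x ^ 3 * sin x ^ 3 <
      cos x * dualWilkerNumerator x := by
  have hx2 : x ^ 2 ≤ 169 / 100 := by nlinarith
  have hNl := (dualWilkerNumerator_bounds hx0.le).1
  have hNl0 := dualWilkerNumeratorLower_nonneg (x := x) (by linarith)
  have hc : 0 ≤ cos x := cos_nonneg_of_mem_Icc ⟨by linarith [pi_pos], by linarith [pi_gt_d2]⟩
  have hs : 0 ≤ sin x := sin_nonneg_of_nonneg_of_le_pi hx0.le (by linarith [pi_gt_d2])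
  have hS : sin x ≤ sinTaylor 3 x := sin_le_sinTaylor 1 hx0.le
  have hC : cosTaylor 4 x ≤ cos x := cosTaylor_le_cos 1 hx0.le
  have hP : 0 ≤ 2 / 45 - 2 / 315 * x ^ 2 - 47 / 10000 * x ^ 4 := by nlinarith
  have hpoly : (2 / 45 - 2 / 315 * x ^ 2 - 47 / 10000 * x ^ 4) * x ^ 3 * sinTaylor 3 x ^ 3 <
      cosTaylor 4 x * dualWilkerNumeratorLower x := by
    have hq : 0 < hornerEval [1361 / 630000, -617317 / 374220000, 455501 / 1069200000,
        -51743 / 935550000, 3621707 / 898128000000, -8683 / 54432000000, 47 / 17280000000]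
        (x ^ 2) := by
      rcases le_total (x ^ 2) (13 / 10) with h | h
      · exact hornerEval_pos le_rfl (sq_nonneg x) h (by norm_num [hornerLowerBound])
      · exact hornerEval_pos (by norm_num) h hx2 (by norm_num [hornerLowerBound])
    refine sub_pos.1 (((mul_pos (pow_pos hx0 10) hq).trans_eq ?_))
    simp only [sinTaylor, cosTaylor, sum_range_succ, sum_range_zero, hornerEval,
      dualWilkerNumeratorLower]
    norm_num [Nat.factorial]
    ring
  calc _ ≤ (2 / 45 - 2 / 315 * x ^ 2 - 47 / 10000 * x ^ 4) * x ^ 3 * sinTaylor 3 x ^ 3 := by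
        gcongr
    _ < _ := hpoly
    _ ≤ _ := by gcongr

theorem lt_cos_mul_dualWilkerNumerator_of_ge {x : ℝ} (hx1 : 13 / 10 ≤ x) (hx : x < π / 2) :
    (2 / 45 - 2 / 315 * x ^ 2 - (224 - 8 * π ^ 2) / (315 * π ^ 4) * x ^ 4) * x ^ 3 * sin x ^ 3 <
      cos x * dualWilkerNumerator x := by
  have hx0 : 0 < x := by linarith
  have hx8 : x ≤ 8 / 5 := by linarith [pi_lt_d2]
  set y := π / 2 - x with hy
  have hy0 : 0 < y := by linarith
  have hy8 : y ≤ 8 / 5 - x := by linarith [pi_lt_d2]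
  have hfactor : 2 / 45 - 2 / 315 * x ^ 2 - (224 - 8 * π ^ 2) / (315 * π ^ 4) * x ^ 4 =
      y * ((π / 2 + x) * ((224 - 8 * π ^ 2) / (315 * π ^ 4) * x ^ 2 + 8 / (45 * π ^ 2))) := by
    rw [hy]
    field_simp
    ring
  have hα := alpha_bounds
  have hκ : 8 / (45 * π ^ 2) ≤ 1 / 55 := by
    rw [div_le_iff₀ (by positivity)]
    nlinarith [pi_gt_d2]
  have hNl := (dualWilkerNumerator_bounds hx0.le).1
  have hNl0 := dualWilkerNumeratorLower_nonneg (x := x) (by nlinarith [pi_lt_d2])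
  have hc : y * (1 - (8 / 5 - x) ^ 2 / 6) ≤ cos x := by
    have h := sinTaylor_le_sin 0 hy0.le
    simp only [sinTaylor, sum_range_succ, sum_range_zero] at h
    norm_num [Nat.factorial] at h
    rw [← sin_pi_div_two_sub]
    nlinarith [mul_le_mul hy8 hy8 hy0.le (by linarith)]
  have hs : 0 ≤ sin x := sin_nonneg_of_nonneg_of_le_pi hx0.le (by linarith [pi_pos])
  have hS : sin x ≤ sinTaylor 3 x := sin_le_sinTaylor 1 hx0.le
  have hpoly : (8 / 5 + x) * (1 / 210 * x ^ 2 + 1 / 55) * x ^ 3 * sinTaylor 3 x ^ 3 <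
      (1 - (8 / 5 - x) ^ 2 / 6) * dualWilkerNumeratorLower x := by
    have hq := hornerEval_pos (by norm_num) hx1 hx8 (cs := [-134 / 37125, 41 / 7425, -17 / 4125,
      7 / 7425, 7636 / 3898125, 3973 / 6237000, -12479 / 23388750, -1571 / 5346000,
      653 / 8505000, 323 / 7128000, -61 / 10395000, -61 / 16632000, 103 / 415800000,
      103 / 665280000, -1 / 226800000, -1 / 362880000]) (by norm_num [hornerLowerBound])
    refine sub_pos.1 (((mul_pos (pow_pos hx0 6) hq).trans_eq ?_))
    simp only [sinTaylor, sum_range_succ, sum_range_zero, hornerEval,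
      dualWilkerNumeratorLower]
    norm_num [Nat.factorial]
    ring
  calc _ = y * ((π / 2 + x) * ((224 - 8 * π ^ 2) / (315 * π ^ 4) * x ^ 2 + 8 / (45 * π ^ 2)) *
        x ^ 3 * sin x ^ 3) := by rw [hfactor]; ring
    _ ≤ y * ((8 / 5 + x) * (1 / 210 * x ^ 2 + 1 / 55) * x ^ 3 * sinTaylor 3 x ^ 3) := by
        have : 0 ≤ (224 - 8 * π ^ 2) / (315 * π ^ 4) := by linarith [hα.1]
        gcongr y * (?_ * (?_ * _ + ?_) * _ * ?_ ^ 3)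
        · linarith [pi_lt_d2]
        · exact hα.2
    _ < y * ((1 - (8 / 5 - x) ^ 2 / 6) * dualWilkerNumeratorLower x) := by
        gcongr
    _ ≤ cos x * dualWilkerNumerator x := by
        rw [← mul_assoc]
        gcongr
        exact (mul_nonneg hy0.le (by nlinarith)).trans hc

theorem lt_cos_mul_dualWilkerNumerator {x : ℝ} (hx0 : 0 < x) (hx : x < π / 2) :
    (2 / 45 - 2 / 315 * x ^ 2 - (224 - 8 * π ^ 2) / (315 * π ^ 4) * x ^ 4) * x ^ 3 * sin x ^ 3 <
      cos x * dualWilkerNumerator x := by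
  rcases le_or_gt x (13 / 10) with h | h
  · have hs : 0 ≤ sin x := sin_nonneg_of_nonneg_of_le_pi hx0.le (by linarith [pi_pos])
    calc _ ≤ (2 / 45 - 2 / 315 * x ^ 2 - 47 / 10000 * x ^ 4) * x ^ 3 * sin x ^ 3 := by
          gcongr (2 / 45 - 2 / 315 * x ^ 2 - ?_ * _) * _ * _
          exact alpha_bounds.1
      _ < _ := lt_cos_mul_dualWilkerNumerator_of_le hx0 h
  · exact lt_cos_mul_dualWilkerNumerator_of_ge h.le hx

theorem stmt_17 (x : ℝ) (h1 : 0 < x) (h2 : x < π / 2) :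
    2 + (2 / 45 - (2 / 315) * x ^ 2 - ((224 - 8 * π ^ 2) / (315 * π ^ 4)) * x ^ 4) * x ^ 3 * tan x <
      (x / sin x) ^ 2 + x / tan x ∧
    (x / sin x) ^ 2 + x / tan x <
      2 + (2 / 45 - (2 / 315) * x ^ 2 - (4 / 1575) * x ^ 4) * x ^ 3 * tan x := by
  have hs : 0 < sin x := sin_pos_of_pos_of_lt_pi h1 (by linarith [pi_pos])
  have hc : 0 < cos x := cos_pos_of_mem_Ioo ⟨by linarith [pi_pos], h2⟩
  exact ⟨(lt_dualWilker_iff _ hs hc).2 (lt_cos_mul_dualWilkerNumerator h1 h2),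
    (dualWilker_lt_iff _ hs hc).2 (cos_mul_dualWilkerNumerator_lt h1 h2)⟩
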